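/- For Re α > n/2 and Im z > 0, the integral ∫_{ℝⁿ} (‖ξ‖² - z)^{-α} dξ (Euclidean norm) equals Γ(α)^{-1} ∫₀^∞ (∫_{ℝⁿ} e^{-t(‖ξ‖²-z)} dξ) t^{α-1} dt = π^{n/2} Γ(α - n/2)/Γ(α) · (-z)^{n/2 - α}, and as a function of α it extends meromorphically with simple poles at α ∈ {n/2, n/2 - 1, ..., 1}, with residue at α = k ∈ {1,...,n/2} (for n even) equal to z^{n/2-k} π^{n/2} / ((n/2-k)! Γ(k)). -/

import Mathlib

/-!
For `Re w > 0` one has `w ^ (-α) = Γ(α)⁻¹ ∫₀^∞ e^{-tw} t^{α-1} dt`: this is the definition of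
`Γ` after a change of variables when `w > 0` is real, and both sides are holomorphic in `w` on the
right half-plane, so the identity theorem extends it. Taking `w = ‖ξ‖² - z` and exchanging the two integrals (justified by the real Gaussian
integral) leaves the Gaussian integral `(π/t)^{n/2} e^{tz}` inside, and the remaining `t`-integral
is again of the same type, giving `π^{n/2} Γ(α - n/2) (-z)^{n/2-α}`.

The poles come from `Γ(α - n/2)`. The residue of `Γ` at `-m` is `(-1)^m / m!`, by induction on `m`
from the residue `1` at `0` and `Γ(s + 1) = s Γ(s)`.
-/

open Real MeasureTheory Set Filter Topology
open scoped Complex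

lemma integrableOn_exp_neg_mul_mul_rpow {b s : ℝ} (hb : 0 < b) (hs : 0 < s) :
    IntegrableOn (fun t : ℝ => rexp (-(t * b)) * t ^ (s - 1)) (Ioi 0) := by
  refine (integrableOn_rpow_mul_exp_neg_mul_rpow (s := s - 1) (p := 1) (by linarith) one_pos
    hb).congr_fun (fun t _ => ?_) measurableSet_Ioi
  simp only [rpow_one]
  ring_nf

lemma norm_cexp_neg_mul_mul_cpow (a w : ℂ) {t : ℝ} (ht : 0 < t) :
    ‖cexp (-(t : ℂ) * w) * (t : ℂ) ^ (a - 1)‖ = rexp (-(t * w.re)) * t ^ (a.re - 1) := by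
  rw [norm_mul, Complex.norm_exp, Complex.norm_cpow_eq_rpow_re_of_pos ht]
  simp

lemma continuousOn_cexp_neg_mul_mul_cpow (a w : ℂ) :
    ContinuousOn (fun t : ℝ => cexp (-(t : ℂ) * w) * (t : ℂ) ^ (a - 1)) (Ioi 0) := by
  refine continuousOn_of_forall_continuousAt fun t ht => ?_
  have : (t : ℂ) ∈ Complex.slitPlane := Complex.ofReal_mem_slitPlane.2 ht
  fun_prop (disch := assumption)

lemma integrableOn_cexp_neg_mul_mul_cpow {a w : ℂ} (ha : 0 < a.re) (hw : 0 < w.re) :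
    IntegrableOn (fun t : ℝ => cexp (-(t : ℂ) * w) * (t : ℂ) ^ (a - 1)) (Ioi 0) := by
  refine (integrableOn_exp_neg_mul_mul_rpow hw ha).mono'
    ((continuousOn_cexp_neg_mul_mul_cpow a w).aestronglyMeasurable measurableSet_Ioi) ?_
  filter_upwards [ae_restrict_mem measurableSet_Ioi] with t ht
  exact (norm_cexp_neg_mul_mul_cpow a w ht).le

lemma differentiableOn_integral_cexp_neg_mul_mul_cpow_Ioi {a : ℂ} (ha : 0 < a.re) :
    DifferentiableOn ℂ (fun w : ℂ => ∫ t in Ioi (0 : ℝ), cexp (-(t : ℂ) * w) * (t : ℂ) ^ (a - 1))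
      {w | 0 < w.re} := by
  intro w₀ hw₀
  set ε := w₀.re / 2 with hε_def
  have hε : 0 < ε := half_pos hw₀
  have hball : ∀ w ∈ Metric.ball w₀ ε, ε ≤ w.re := fun w hw => by
    have := (Complex.abs_re_le_norm (w - w₀)).trans_lt (mem_ball_iff_norm.1 hw)
    rw [Complex.sub_re, abs_lt] at this
    linarith [this.1]
  -- The `w`-derivative `-t e^{-tw} t^{a-1}` is written with exponent `a + 1`, so that
  -- `norm_cexp_neg_mul_mul_cpow` computes its norm.
  refine (hasDerivAt_integral_of_dominated_loc_of_deriv_le (μ := volume.restrict (Ioi 0))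
    (F := fun w t => cexp (-(t : ℂ) * w) * (t : ℂ) ^ (a - 1))
    (F' := fun w t => cexp (-(t : ℂ) * w) * (t : ℂ) ^ (a + 1 - 1) * -1)
    (bound := fun t => rexp (-(t * ε)) * t ^ ((a + 1).re - 1))
    (Metric.ball_mem_nhds w₀ hε) (.of_forall fun w => ?_)
    (integrableOn_cexp_neg_mul_mul_cpow ha hw₀) ?_ ?_
    (integrableOn_exp_neg_mul_mul_rpow hε (by simp; linarith)) ?_).2.differentiableAt
    |>.differentiableWithinAt
  · exact (continuousOn_cexp_neg_mul_mul_cpow a w).aestronglyMeasurable measurableSet_Ioi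
  · exact ((continuousOn_cexp_neg_mul_mul_cpow (a + 1) w₀).mul
      continuousOn_const).aestronglyMeasurable measurableSet_Ioi
  · filter_upwards [ae_restrict_mem measurableSet_Ioi] with t (ht : 0 < t) w hw
    rw [norm_mul, norm_cexp_neg_mul_mul_cpow _ _ ht, norm_neg, norm_one, mul_one]
    gcongr
    nlinarith [hball w hw]
  · filter_upwards [ae_restrict_mem measurableSet_Ioi] with t (ht : 0 < t) w _
    have ht' : (t : ℂ) ≠ 0 := Complex.ofReal_ne_zero.2 ht.ne'
    refine ((((hasDerivAt_id w).const_mul (-(t : ℂ))).cexp).mul_const _).congr_deriv ?_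
    rw [show a + 1 - 1 = a - 1 + 1 by ring, Complex.cpow_add _ _ ht', Complex.cpow_one]
    simp only [id]
    ring

lemma integral_cexp_neg_mul_mul_cpow_Ioi {a w : ℂ} (ha : 0 < a.re) (hw : 0 < w.re) :
    ∫ t in Ioi (0 : ℝ), cexp (-(t : ℂ) * w) * (t : ℂ) ^ (a - 1) = Complex.Gamma a * w ^ (-a) := by
  have hU : IsOpen {w : ℂ | 0 < w.re} := isOpen_lt continuous_const Complex.continuous_re
  have hlhs := (differentiableOn_integral_cexp_neg_mul_mul_cpow_Ioi ha).analyticOnNhd hU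
  have hrhs : AnalyticOnNhd ℂ (fun w : ℂ => Complex.Gamma a * w ^ (-a)) {w | 0 < w.re} :=
    DifferentiableOn.analyticOnNhd (fun w hw => ((differentiableAt_id.cpow
      (differentiableAt_const _) (Or.inl hw)).const_mul _).differentiableWithinAt) hU
  have hreal : ∀ r : ℝ, 0 < r →
      ∫ t in Ioi (0 : ℝ), cexp (-(t : ℂ) * r) * (t : ℂ) ^ (a - 1) = Complex.Gamma a * r ^ (-a) := by
    intro r hr
    calc ∫ t in Ioi (0 : ℝ), cexp (-(t : ℂ) * r) * (t : ℂ) ^ (a - 1)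
        = ∫ t in Ioi (0 : ℝ), (t : ℂ) ^ (a - 1) * cexp (-(r * t)) := by
          congr 1 with t
          ring_nf
      _ = (1 / r) ^ a * Complex.Gamma a := Complex.integral_cpow_mul_exp_neg_mul_Ioi ha hr
      _ = Complex.Gamma a * r ^ (-a) := by
          rw [one_div, Complex.inv_cpow_ofReal_nonneg hr.le, Complex.cpow_neg, mul_comm]
  have hfreq : ∃ᶠ w in 𝓝[≠] (1 : ℂ),
      ∫ t in Ioi (0 : ℝ), cexp (-(t : ℂ) * w) * (t : ℂ) ^ (a - 1) = Complex.Gamma a * w ^ (-a) := by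
    have hmap : Tendsto ((↑) : ℝ → ℂ) (𝓝[≠] 1) (𝓝[≠] 1) :=
      Complex.continuous_ofReal.continuousWithinAt.tendsto_nhdsWithin
        fun _ hx => Complex.ofReal_injective.ne hx
    refine hmap.frequently (Eventually.frequently ?_)
    filter_upwards [nhdsWithin_le_nhds (Ioi_mem_nhds one_pos)] with r hr
    exact hreal r hr
  exact hlhs.eqOn_of_preconnected_of_frequently_eq hrhs (convex_halfSpace_re_gt 0).isPreconnected
    (by simp) hfreq hw

lemma cexp_neg_mul_norm_sq_sub {V : Type*} [NormedAddCommGroup V] (z : ℂ) (t : ℝ) (ξ : V) :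
    cexp (-(t : ℂ) * (((‖ξ‖ ^ 2 : ℝ) : ℂ) - z)) = cexp (t * z) * cexp (-t * ‖ξ‖ ^ 2) := by
  rw [← Complex.exp_add]
  push_cast
  ring_nf

section Euclidean

variable {V : Type*} [NormedAddCommGroup V] [InnerProductSpace ℝ V] [FiniteDimensional ℝ V]
  [MeasurableSpace V] [BorelSpace V]

lemma integrable_cexp_neg_mul_norm_sq_sub (z : ℂ) {t : ℝ} (ht : 0 < t) :
    Integrable fun ξ : V => cexp (-(t : ℂ) * (((‖ξ‖ ^ 2 : ℝ) : ℂ) - z)) := by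
  simp_rw [cexp_neg_mul_norm_sq_sub]
  simpa using (GaussianFourier.integrable_cexp_neg_mul_sq_norm_add (V := V)
    (b := t) (by simpa) 0 0).const_mul (cexp (t * z))

lemma integral_cexp_neg_mul_norm_sq_sub (z : ℂ) {t : ℝ} (ht : 0 < t) :
    ∫ ξ : V, cexp (-(t : ℂ) * (((‖ξ‖ ^ 2 : ℝ) : ℂ) - z)) =
      (π / t) ^ (Module.finrank ℝ V / 2 : ℂ) * cexp (t * z) := by
  simp_rw [cexp_neg_mul_norm_sq_sub, integral_const_mul,
    GaussianFourier.integral_cexp_neg_mul_sq_norm (V := V) (b := t) (by simpa), mul_comm]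

lemma integral_norm_cexp_neg_mul_norm_sq_sub_mul_cpow (z α : ℂ) {t : ℝ} (ht : 0 < t) :
    ∫ ξ : V, ‖cexp (-(t : ℂ) * (((‖ξ‖ ^ 2 : ℝ) : ℂ) - z)) * (t : ℂ) ^ (α - 1)‖ =
      π ^ (Module.finrank ℝ V / 2 : ℝ) *
        (rexp (-(t * -z.re)) * t ^ (α.re - Module.finrank ℝ V / 2 - 1)) := by
  have hnorm (ξ : V) : ‖cexp (-(t : ℂ) * (((‖ξ‖ ^ 2 : ℝ) : ℂ) - z)) * (t : ℂ) ^ (α - 1)‖ =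
      rexp (t * z.re) * t ^ (α.re - 1) * rexp (-t * ‖ξ‖ ^ 2) := by
    rw [norm_cexp_neg_mul_mul_cpow _ _ ht, Complex.sub_re, Complex.ofReal_re,
      mul_right_comm, ← Real.exp_add]
    ring_nf
  simp_rw [hnorm, integral_const_mul, GaussianFourier.integral_rexp_neg_mul_sq_norm ht,
    Real.div_rpow pi_pos.le ht.le, Real.rpow_sub ht, Real.rpow_one]
  field_simp

lemma integrable_cexp_neg_mul_norm_sq_sub_mul_cpow {z α : ℂ} (hz : z.re < 0)
    (hα : (Module.finrank ℝ V : ℝ) / 2 < α.re) :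
    Integrable (Function.uncurry fun (t : ℝ) (ξ : V) =>
        cexp (-(t : ℂ) * (((‖ξ‖ ^ 2 : ℝ) : ℂ) - z)) * (t : ℂ) ^ (α - 1))
      ((volume.restrict (Ioi 0)).prod volume) := by
  have hmeas : AEStronglyMeasurable (Function.uncurry fun (t : ℝ) (ξ : V) =>
        cexp (-(t : ℂ) * (((‖ξ‖ ^ 2 : ℝ) : ℂ) - z)) * (t : ℂ) ^ (α - 1))
      ((volume.restrict (Ioi 0)).prod volume) := by
    rw [← Measure.restrict_univ (μ := (volume : Measure V)), Measure.prod_restrict]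
    refine ContinuousOn.aestronglyMeasurable (fun x hx => ?_) (measurableSet_Ioi.prod .univ)
    have : ((x.1 : ℝ) : ℂ) ∈ Complex.slitPlane := Complex.ofReal_mem_slitPlane.2 hx.1
    exact ContinuousAt.continuousWithinAt (by fun_prop (disch := assumption))
  refine (integrable_prod_iff hmeas).2 ⟨?_, ?_⟩
  · filter_upwards [ae_restrict_mem measurableSet_Ioi] with t (ht : 0 < t)
    exact (integrable_cexp_neg_mul_norm_sq_sub (V := V) z ht).mul_const ((t : ℂ) ^ (α - 1))
  · refine IntegrableOn.congr_fun ((integrableOn_exp_neg_mul_mul_rpow (neg_pos.2 hz)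
      (sub_pos.2 hα)).const_mul (π ^ (Module.finrank ℝ V / 2 : ℝ)))
      (fun t (ht : 0 < t) => ?_) measurableSet_Ioi
    exact (integral_norm_cexp_neg_mul_norm_sq_sub_mul_cpow z α ht).symm

lemma integral_norm_sq_sub_cpow_neg {z α : ℂ} (hz : z.re < 0)
    (hα : (Module.finrank ℝ V : ℝ) / 2 < α.re) :
    ∫ ξ : V, (((‖ξ‖ ^ 2 : ℝ) : ℂ) - z) ^ (-α) =
      1 / Complex.Gamma α * ∫ t in Ioi (0 : ℝ),
        (∫ ξ : V, cexp (-(t : ℂ) * (((‖ξ‖ ^ 2 : ℝ) : ℂ) - z))) * (t : ℂ) ^ (α - 1) := by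
  have hα₀ : 0 < α.re := lt_of_le_of_lt (by positivity) hα
  have hΓ : Complex.Gamma α ≠ 0 := Complex.Gamma_ne_zero_of_re_pos hα₀
  have hpow (ξ : V) : (((‖ξ‖ ^ 2 : ℝ) : ℂ) - z) ^ (-α) = 1 / Complex.Gamma α *
      ∫ t in Ioi (0 : ℝ), cexp (-(t : ℂ) * (((‖ξ‖ ^ 2 : ℝ) : ℂ) - z)) * (t : ℂ) ^ (α - 1) := by
    have hre : 0 < (((‖ξ‖ ^ 2 : ℝ) : ℂ) - z).re := by
      rw [Complex.sub_re, Complex.ofReal_re]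
      linarith [sq_nonneg ‖ξ‖]
    rw [integral_cexp_neg_mul_mul_cpow_Ioi hα₀ hre]
    field_simp
  simp_rw [hpow, integral_const_mul, ← integral_mul_const]
  rw [integral_integral_swap (integrable_cexp_neg_mul_norm_sq_sub_mul_cpow hz hα)]

lemma integral_integral_cexp_neg_mul_norm_sq_sub_mul_cpow {z α : ℂ} (hz : z.re < 0)
    (hα : (Module.finrank ℝ V : ℝ) / 2 < α.re) :
    ∫ t in Ioi (0 : ℝ),
        (∫ ξ : V, cexp (-(t : ℂ) * (((‖ξ‖ ^ 2 : ℝ) : ℂ) - z))) * (t : ℂ) ^ (α - 1) =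
      (π : ℂ) ^ (Module.finrank ℝ V / 2 : ℂ) * Complex.Gamma (α - Module.finrank ℝ V / 2) *
        (-z) ^ ((Module.finrank ℝ V / 2 : ℂ) - α) := by
  have hs : 0 < (α - Module.finrank ℝ V / 2).re := by simpa using hα
  calc _ = ∫ t in Ioi (0 : ℝ), (π : ℂ) ^ (Module.finrank ℝ V / 2 : ℂ) *
        (cexp (-(t : ℂ) * -z) * (t : ℂ) ^ (α - Module.finrank ℝ V / 2 - 1)) := by
        refine setIntegral_congr_fun measurableSet_Ioi fun t (ht : 0 < t) => ?_
        rw [integral_cexp_neg_mul_norm_sq_sub z ht,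
          Complex.div_cpow_ofReal_nonneg pi_pos.le ht.le, sub_right_comm,
          Complex.cpow_sub (α - 1) _ (Complex.ofReal_ne_zero.2 ht.ne'), neg_mul_neg]
        ring
    _ = _ := by
        rw [integral_const_mul, integral_cexp_neg_mul_mul_cpow_Ioi hs (by simpa using hz), neg_sub,
          mul_assoc]

end Euclidean

lemma tendsto_add_mul_Gamma_nhds_neg_nat (m : ℕ) :
    Tendsto (fun s : ℂ => (s + m) * Complex.Gamma s) (𝓝[≠] (-m))
      (𝓝 ((-1) ^ m / m.factorial)) := by
  induction m with
  | zero => simpa using Complex.tendsto_self_mul_Gamma_nhds_zero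
  | succ m ih =>
    have hm : (-(m + 1 : ℕ) : ℂ) ≠ 0 := neg_ne_zero.2 (Nat.cast_ne_zero.2 m.succ_ne_zero)
    have hshift : Tendsto (· + 1) (𝓝[≠] (-(m + 1 : ℕ) : ℂ)) (𝓝[≠] (-m : ℂ)) := by
      rw [show (-m : ℂ) = -(m + 1 : ℕ) + 1 by push_cast; ring]
      exact (continuous_add_const 1).continuousWithinAt.tendsto_nhdsWithin
        fun _ hs => (add_left_injective (1 : ℂ)).ne hs
    have hinv : Tendsto (·⁻¹) (𝓝[≠] (-(m + 1 : ℕ) : ℂ)) (𝓝 (-(m + 1 : ℕ) : ℂ)⁻¹) :=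
      (continuousAt_inv₀ hm).tendsto.mono_left nhdsWithin_le_nhds
    have hrec : ∀ᶠ s in 𝓝[≠] (-(m + 1 : ℕ) : ℂ),
        (s + 1 + m) * Complex.Gamma (s + 1) * s⁻¹ = (s + (m + 1 : ℕ)) * Complex.Gamma s := by
      filter_upwards [nhdsWithin_le_nhds (isOpen_ne.mem_nhds hm)] with s (hs : s ≠ 0)
      rw [Complex.Gamma_add_one s hs]
      field_simp
      push_cast
      ring
    convert ((ih.comp hshift).mul hinv).congr' hrec using 2
    push_cast [Nat.factorial_succ]
    field_simp
    ring

lemma tendsto_sub_mul_Gamma_sub_div_Gamma_mul_cpow (c z : ℂ) (hz : z ≠ 0) {k p : ℕ}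
    (hk : 1 ≤ k) (hkp : k ≤ p) :
    Tendsto
      (fun α : ℂ => (α - k) * (c * Complex.Gamma (α - p) / Complex.Gamma α * (-z) ^ (p - α)))
      (𝓝[≠] (k : ℂ)) (𝓝 (z ^ (p - k) * c / ((p - k).factorial * Complex.Gamma k))) := by
  obtain ⟨m, rfl⟩ := Nat.exists_eq_add_of_le hkp
  have hk₀ : ∀ n : ℕ, (k : ℂ) ≠ -n := fun n h => by
    have := congrArg Complex.re h
    simp at this
    omega
  have hshift : Tendsto (· - ((k + m : ℕ) : ℂ)) (𝓝[≠] (k : ℂ)) (𝓝[≠] (-m : ℂ)) := by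
    rw [show (-m : ℂ) = k - ((k + m : ℕ) : ℂ) by push_cast; ring]
    exact (continuous_sub_right _).continuousWithinAt.tendsto_nhdsWithin
      fun _ hs => sub_left_injective.ne hs
  have hrest : Tendsto (fun α : ℂ => c / Complex.Gamma α * (-z) ^ (((k + m : ℕ) : ℂ) - α))
      (𝓝[≠] (k : ℂ)) (𝓝 (c / Complex.Gamma k * (-z) ^ (((k + m : ℕ) : ℂ) - k))) := by
    refine ContinuousAt.tendsto ?_ |>.mono_left nhdsWithin_le_nhds
    exact (continuousAt_const.div (Complex.continuousAt_Gamma _ hk₀)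
      (Complex.Gamma_ne_zero hk₀)).mul
        ((continuousAt_const.sub continuousAt_id).const_cpow (Or.inl (neg_ne_zero.2 hz)))
  convert ((tendsto_add_mul_Gamma_nhds_neg_nat m).comp hshift).mul hrest using 1
  · ext α
    simp only [Function.comp_apply]
    push_cast
    ring
  · rw [Nat.add_sub_cancel_left, show ((k + m : ℕ) : ℂ) - k = (m : ℕ) by push_cast; ring,
      Complex.cpow_natCast]
    have : (z : ℂ) ^ m = (-1) ^ m * (-z) ^ m := by rw [← mul_pow]; ring
    rw [this]
    field_simp

theorem stmt7_general (p : ℕ) (z : ℂ) (hz : z.re < 0) :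
    (∀ α : ℂ, (p : ℝ) < α.re →
      (∫ ξ : EuclideanSpace ℝ (Fin (2 * p)), (((‖ξ‖ ^ 2 : ℝ) : ℂ) - z) ^ (-α)) =
          (1 / Complex.Gamma α) *
            ∫ t in Ioi (0 : ℝ),
              (∫ ξ : EuclideanSpace ℝ (Fin (2 * p)),
                Complex.exp (-(t : ℂ) * (((‖ξ‖ ^ 2 : ℝ) : ℂ) - z))) * (t : ℂ) ^ (α - 1) ∧
        (∫ ξ : EuclideanSpace ℝ (Fin (2 * p)), (((‖ξ‖ ^ 2 : ℝ) : ℂ) - z) ^ (-α)) =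
          (π : ℂ) ^ p * Complex.Gamma (α - (p : ℂ)) / Complex.Gamma α *
            (-z) ^ ((p : ℂ) - α)) ∧
    (∀ k : ℕ, 1 ≤ k → k ≤ p →
      Tendsto (fun α : ℂ => (α - (k : ℂ)) *
          ((π : ℂ) ^ p * Complex.Gamma (α - (p : ℂ)) / Complex.Gamma α *
            (-z) ^ ((p : ℂ) - α)))
        (𝓝[≠] (k : ℂ))
        (𝓝 (z ^ (p - k) * (π : ℂ) ^ p / (((p - k).factorial : ℂ) * Complex.Gamma (k : ℂ))))) := by
  have hdim : (Module.finrank ℝ (EuclideanSpace ℝ (Fin (2 * p))) : ℂ) / 2 = p := by simp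
  have hz₀ : z ≠ 0 := fun h => by simp [h] at hz
  refine ⟨fun α hα => ?_, fun k hk hkp =>
    tendsto_sub_mul_Gamma_sub_div_Gamma_mul_cpow _ z hz₀ hk hkp⟩
  have hα' : (Module.finrank ℝ (EuclideanSpace ℝ (Fin (2 * p))) : ℝ) / 2 < α.re := by
    simpa using hα
  refine ⟨integral_norm_sq_sub_cpow_neg hz hα', ?_⟩
  rw [integral_norm_sq_sub_cpow_neg hz hα',
    integral_integral_cexp_neg_mul_norm_sq_sub_mul_cpow hz hα', hdim, Complex.cpow_natCast]
  ring

/-- For `n = 2p` even, `Re z < 0` and `Re α > n/2`, the integral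
`∫_{ℝⁿ} (‖ξ‖² - z)^{-α} dξ` equals `Γ(α)⁻¹ ∫₀^∞ (∫_{ℝⁿ} e^{-t(‖ξ‖²-z)} dξ) t^{α-1} dt`
and equals `π^{n/2} Γ(α - n/2)/Γ(α) · (-z)^{n/2-α}`; the latter closed form is the
meromorphic continuation in `α`, with simple poles at `α ∈ {n/2, …, 1}`, and for
`k ∈ {1,…,n/2}` the residue at `α = k` is `z^{n/2-k} π^{n/2}/((n/2-k)! Γ(k))`
(stated as the limit of `(α - k)` times the function along `α → k`). -/
theorem stmt7 (p : ℕ) (hp : 0 < p) (z : ℂ) (hz : z.re < 0) :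
    (∀ α : ℂ, (p : ℝ) < α.re →
      (∫ ξ : EuclideanSpace ℝ (Fin (2 * p)), (((‖ξ‖ ^ 2 : ℝ) : ℂ) - z) ^ (-α)) =
          (1 / Complex.Gamma α) *
            ∫ t in Ioi (0 : ℝ),
              (∫ ξ : EuclideanSpace ℝ (Fin (2 * p)),
                Complex.exp (-(t : ℂ) * (((‖ξ‖ ^ 2 : ℝ) : ℂ) - z))) * (t : ℂ) ^ (α - 1) ∧
        (∫ ξ : EuclideanSpace ℝ (Fin (2 * p)), (((‖ξ‖ ^ 2 : ℝ) : ℂ) - z) ^ (-α)) =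
          (π : ℂ) ^ p * Complex.Gamma (α - (p : ℂ)) / Complex.Gamma α *
            (-z) ^ ((p : ℂ) - α)) ∧
    (∀ k : ℕ, 1 ≤ k → k ≤ p →
      Tendsto (fun α : ℂ => (α - (k : ℂ)) *
          ((π : ℂ) ^ p * Complex.Gamma (α - (p : ℂ)) / Complex.Gamma α *
            (-z) ^ ((p : ℂ) - α)))
        (𝓝[≠] (k : ℂ))
        (𝓝 (z ^ (p - k) * (π : ℂ) ^ p / (((p - k).factorial : ℂ) * Complex.Gamma (k : ℂ))))) :=
  stmt7_general p z hz
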